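/- arXiv:1704.04821 — 5 statements merged into one kernel-verified Lean document; each statement's English description precedes it below -/
import Mathlib

section
/- Let λ > 0 and let h_f, h_b : [0,1] → ℝ be continuous on [0,1] and twice differentiable on (0,1), satisfying the differential inequalities h_f''(t) ≥ −λ·h_f'(t) and h_b''(t) ≥ λ·h_b'(t) for all t ∈ (0,1). Then for every t ∈ [0,1]: h_f(t) + h_b(t) ≤ (h_f(0) + h_b(0))·(1 − exp(−λ(1−t)))/(1 − exp(−λ)) + (h_f(1) + h_b(1))·(1 − exp(−λt))/(1 − exp(−λ)) − (h_f(0) + h_b(1))·(cosh(λ/2) − cosh(λ(t − 1/2)))/sinh(λ/2). -/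
/-!
If `u'' + μ u' ≥ 0` on `(0,1)` then `e^{μs} u'(s)` is nondecreasing, and this maximum principle
puts `u` below the solution of `φ'' + μ φ' = 0` with the same boundary values, namely
`u(0) (1 - φ_μ) + u(1) φ_μ` with `φ_μ(t) = (1 - e^{-μt}) / (1 - e^{-μ})`.
Apply it to `h_f` with `μ = λ` and to `h_b` with `μ = -λ`, and add. The resulting bound is the
claimed one by the identities `φ_{-λ}(t) = 1 - φ_λ(1 - t)` and
`φ_λ(t) - φ_{-λ}(t) = (cosh(λ/2) - cosh(λ(t - 1/2))) / sinh(λ/2)`.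
-/

open Set Real

/-- If `w t < 0`, the mean value theorem gives a point left of `t` where `w' < 0` and one right
of `t` where `w' > 0`, which `ρ > 0` and the antitonicity of `ρ w'` forbid. -/
theorem nonneg_of_antitoneOn_mul_deriv {w ρ : ℝ → ℝ} {a b t : ℝ}
    (hw : ContinuousOn w (Icc a b)) (hwd : ∀ s ∈ Ioo a b, DifferentiableAt ℝ w s)
    (hwa : w a = 0) (hwb : w b = 0) (hρ : ∀ s ∈ Ioo a b, 0 < ρ s)
    (hanti : AntitoneOn (fun s => ρ s * deriv w s) (Ioo a b)) (ht : t ∈ Icc a b) :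
    0 ≤ w t := by
  by_contra! hneg
  have hat : a < t := ht.1.lt_of_ne (by rintro rfl; linarith)
  have htb : t < b := ht.2.lt_of_ne (by rintro rfl; linarith)
  obtain ⟨c, hc, hc_slope⟩ := exists_deriv_eq_slope w hat (hw.mono (Icc_subset_Icc_right ht.2))
    fun s hs => (hwd s ⟨hs.1, hs.2.trans htb⟩).differentiableWithinAt
  obtain ⟨d, hd, hd_slope⟩ := exists_deriv_eq_slope w htb (hw.mono (Icc_subset_Icc_left ht.1))
    fun s hs => (hwd s ⟨hat.trans hs.1, hs.2⟩).differentiableWithinAt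
  have hc_mem : c ∈ Ioo a b := ⟨hc.1, hc.2.trans htb⟩
  have hd_mem : d ∈ Ioo a b := ⟨hat.trans hd.1, hd.2⟩
  have hc_neg : deriv w c < 0 := by
    rw [hc_slope, hwa]; exact div_neg_of_neg_of_pos (by linarith) (by linarith)
  have hd_pos : 0 < deriv w d := by
    rw [hd_slope, hwb]; exact div_pos (by linarith) (by linarith)
  have : ρ d * deriv w d ≤ ρ c * deriv w c := hanti hc_mem hd_mem (hc.2.trans hd.1).le
  nlinarith [mul_neg_of_pos_of_neg (hρ c hc_mem) hc_neg, mul_pos (hρ d hd_mem) hd_pos]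

theorem monotoneOn_exp_mul_deriv {u : ℝ → ℝ} {μ a b : ℝ}
    (hu : ∀ s ∈ Ioo a b, DifferentiableAt ℝ (deriv u) s)
    (h : ∀ s ∈ Ioo a b, -μ * deriv u s ≤ deriv (deriv u) s) :
    MonotoneOn (fun s => exp (μ * s) * deriv u s) (Ioo a b) := by
  have hderiv : ∀ s ∈ Ioo a b, HasDerivAt (fun s => exp (μ * s) * deriv u s)
      (exp (μ * s) * (deriv (deriv u) s + μ * deriv u s)) s := by
    intro s hs
    refine ((((hasDerivAt_id' s).const_mul μ).exp).fun_mul (hu s hs).hasDerivAt).congr_deriv ?_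
    ring
  refine monotoneOn_of_hasDerivWithinAt_nonneg (convex_Ioo a b)
    (f' := fun s => exp (μ * s) * (deriv (deriv u) s + μ * deriv u s))
    (fun s hs => (hderiv s hs).continuousAt.continuousWithinAt) ?_ ?_ <;> rw [interior_Ioo]
  · exact fun s hs => (hderiv s hs).hasDerivWithinAt
  · exact fun s hs => mul_nonneg (exp_pos _).le (by linarith [h s hs])

/-- The solution of `φ'' + μ φ' = 0` with `φ 0 = 0` and `φ 1 = 1` when `μ ≠ 0`
(for `μ = 0` the denominator vanishes and the value is the junk `0`). -/
noncomputable def expInterpWeight (μ t : ℝ) : ℝ :=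
  (1 - exp (-(μ * t))) / (1 - exp (-μ))

theorem expInterpWeight_zero_right (μ : ℝ) : expInterpWeight μ 0 = 0 := by
  simp [expInterpWeight]

theorem expInterpWeight_one_right {μ : ℝ} (hμ : μ ≠ 0) : expInterpWeight μ 1 = 1 := by
  have hD : 1 - exp (-μ) ≠ 0 := by
    rw [sub_ne_zero, ne_comm, Ne, exp_eq_one_iff, neg_eq_zero]; exact hμ
  rw [expInterpWeight, mul_one, div_self hD]

theorem hasDerivAt_expInterpWeight (μ t : ℝ) :
    HasDerivAt (expInterpWeight μ) (μ * exp (-(μ * t)) / (1 - exp (-μ))) t := by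
  refine (((((hasDerivAt_id' t).const_mul μ).fun_neg.exp).const_sub 1).div_const
    (1 - exp (-μ))).congr_deriv ?_
  ring

theorem differentiable_expInterpWeight (μ : ℝ) : Differentiable ℝ (expInterpWeight μ) :=
  fun t => (hasDerivAt_expInterpWeight μ t).differentiableAt

theorem exp_mul_deriv_expInterpWeight (μ t : ℝ) :
    exp (μ * t) * deriv (expInterpWeight μ) t = μ / (1 - exp (-μ)) := by
  rw [(hasDerivAt_expInterpWeight μ t).deriv, exp_neg]
  field_simp

theorem expInterpWeight_neg {μ : ℝ} (hμ : μ ≠ 0) (t : ℝ) :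
    expInterpWeight (-μ) t = 1 - expInterpWeight μ (1 - t) := by
  have hE : 1 - exp μ ≠ 0 := by rw [sub_ne_zero, ne_comm, Ne, exp_eq_one_iff]; exact hμ
  have hE' : exp μ - 1 ≠ 0 := fun h => hE (by linarith)
  have h_shift : exp (-(-μ * t)) = exp (-(μ * (1 - t))) * exp μ := by
    rw [← exp_add]; ring_nf
  rw [expInterpWeight, expInterpWeight, h_shift, neg_neg, exp_neg μ]
  field_simp
  ring

theorem expInterpWeight_sub_expInterpWeight_neg {μ : ℝ} (hμ : μ ≠ 0) (t : ℝ) :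
    expInterpWeight μ t - expInterpWeight (-μ) t
      = (cosh (μ / 2) - cosh (μ * (t - 1 / 2))) / sinh (μ / 2) := by
  set x := exp (μ / 2) with hx_def
  set y := exp (μ * t) with hy_def
  have hx : 0 < x := exp_pos _
  have hy : 0 < y := exp_pos _
  have hx2 : 1 - x ^ 2 ≠ 0 := by
    rw [sub_ne_zero, ne_comm, ← exp_nat_mul, Ne, exp_eq_one_iff]
    push_cast
    intro h; apply hμ; linarith
  have hx2' : x ^ 2 - 1 ≠ 0 := fun h => hx2 (by linarith)
  have hμx : exp μ = x ^ 2 := by rw [← exp_nat_mul]; ring_nf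
  have hty : exp (μ * (t - 1 / 2)) = y / x := by rw [← exp_sub]; ring_nf
  simp only [expInterpWeight, cosh_eq, sinh_eq, exp_neg, neg_mul, neg_neg, hμx, hty,
    ← hx_def, ← hy_def]
  field_simp
  ring

theorem le_expInterpWeight_of_deriv_deriv_ge {μ : ℝ} (hμ : μ ≠ 0) {u : ℝ → ℝ} {t : ℝ}
    (hu : ContinuousOn u (Icc 0 1)) (hud : ∀ s ∈ Ioo (0 : ℝ) 1, DifferentiableAt ℝ u s)
    (hud2 : ∀ s ∈ Ioo (0 : ℝ) 1, DifferentiableAt ℝ (deriv u) s)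
    (h : ∀ s ∈ Ioo (0 : ℝ) 1, -μ * deriv u s ≤ deriv (deriv u) s) (ht : t ∈ Icc 0 1) :
    u t ≤ u 0 * (1 - expInterpWeight μ t) + u 1 * expInterpWeight μ t := by
  set w : ℝ → ℝ := fun s => u 0 * (1 - expInterpWeight μ s) + u 1 * expInterpWeight μ s - u s
  have hφ := differentiable_expInterpWeight μ
  have hw_cont : ContinuousOn w (Icc 0 1) := by
    have := hφ.continuous; unfold w; fun_prop
  have hw_diff : ∀ s ∈ Ioo (0 : ℝ) 1, DifferentiableAt ℝ w s := fun s hs => by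
    have := hud s hs; unfold w; fun_prop
  have hw_deriv : ∀ s ∈ Ioo (0 : ℝ) 1,
      exp (μ * s) * deriv w s = (u 1 - u 0) * (μ / (1 - exp (-μ))) - exp (μ * s) * deriv u s := by
    intro s hs
    have hw : deriv w s = (u 1 - u 0) * deriv (expInterpWeight μ) s - deriv u s := by
      unfold w
      rw [deriv_fun_sub (by fun_prop) (hud s hs), deriv_fun_add (by fun_prop) (by fun_prop),
        deriv_const_mul _ (by fun_prop), deriv_const_mul _ (by fun_prop),
        deriv_const_sub]
      ring
    rw [hw, ← exp_mul_deriv_expInterpWeight μ s]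
    ring
  have hw_anti : AntitoneOn (fun s => exp (μ * s) * deriv w s) (Ioo 0 1) := by
    intro x hx y hy hxy
    simp only [hw_deriv x hx, hw_deriv y hy]
    linarith [monotoneOn_exp_mul_deriv hud2 h hx hy hxy]
  have := nonneg_of_antitoneOn_mul_deriv hw_cont hw_diff
    (by simp [w, expInterpWeight_zero_right]) (by simp [w, expInterpWeight_one_right hμ])
    (fun s _ => exp_pos (μ * s)) hw_anti ht
  simp only [w] at this
  linarith

/-- The analytic core of Theorem 1.3 (entropy bound along Schrödinger bridges):
if `h_f'' ≥ -λ h_f'` and `h_b'' ≥ λ h_b'` on `(0,1)`, then for every `t ∈ [0,1]`,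
`h_f(t)+h_b(t)` is bounded by the stated combination of boundary values. -/
theorem entropy_bound_along_bridge
    (lam : ℝ) (hlam : 0 < lam) (hf hb : ℝ → ℝ)
    (hfc : ContinuousOn hf (Set.Icc 0 1))
    (hbc : ContinuousOn hb (Set.Icc 0 1))
    (hfd : ∀ t ∈ Set.Ioo (0:ℝ) 1, DifferentiableAt ℝ hf t)
    (hfd2 : ∀ t ∈ Set.Ioo (0:ℝ) 1, DifferentiableAt ℝ (deriv hf) t)
    (hbd : ∀ t ∈ Set.Ioo (0:ℝ) 1, DifferentiableAt ℝ hb t)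
    (hbd2 : ∀ t ∈ Set.Ioo (0:ℝ) 1, DifferentiableAt ℝ (deriv hb) t)
    (hfineq : ∀ t ∈ Set.Ioo (0:ℝ) 1, deriv (deriv hf) t ≥ -lam * deriv hf t)
    (hbineq : ∀ t ∈ Set.Ioo (0:ℝ) 1, deriv (deriv hb) t ≥ lam * deriv hb t) :
    ∀ t ∈ Set.Icc (0:ℝ) 1,
      hf t + hb t ≤
        (hf 0 + hb 0) * (1 - Real.exp (-(lam * (1 - t)))) / (1 - Real.exp (-lam))
        + (hf 1 + hb 1) * (1 - Real.exp (-(lam * t))) / (1 - Real.exp (-lam))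
        - (hf 0 + hb 1) *
            (Real.cosh (lam / 2) - Real.cosh (lam * (t - 1/2))) / Real.sinh (lam / 2) := by
  intro t ht
  have hlam0 : lam ≠ 0 := hlam.ne'
  have hF := le_expInterpWeight_of_deriv_deriv_ge hlam0 hfc hfd hfd2 hfineq ht
  have hB := le_expInterpWeight_of_deriv_deriv_ge (neg_ne_zero.2 hlam0) hbc hbd hbd2
    (fun s hs => (neg_neg lam).symm ▸ hbineq s hs) ht
  have hsymm := expInterpWeight_neg hlam0 t
  have hdiff := expInterpWeight_sub_expInterpWeight_neg hlam0 t
  unfold expInterpWeight at hF hB hsymm hdiff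
  linear_combination hF + hB - (hf 0 + hb 0) * hsymm - (hf 0 + hb 1) * hdiff
end

section
/- Let λ > 0 and let h_f, h_b : [0,1] → ℝ be continuous on [0,1] and twice differentiable on (0,1), satisfying h_f''(t) ≥ −λ·h_f'(t) and h_b''(t) ≥ λ·h_b'(t) for all t ∈ (0,1). If moreover h_f(1/2) + h_b(1/2) ≥ 0, then h_f(0) + h_b(1) ≤ (1/(1 − exp(−λ/2)))·((h_f(0) + h_b(0)) + (h_f(1) + h_b(1))). -/
/-!
If `h'' ≥ -μ h'`, then `exp (μ t) * h' t` is nondecreasing, hence `exp (-μ δ) * h' t ≤ h' (t + δ)`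
and `t ↦ h (t + δ) - exp (-μ δ) * h t` is nondecreasing. With `δ = 1/2` and `θ = exp (-λ/2)` this
gives `θ (h_f(1/2) - h_f(0)) ≤ h_f(1) - h_f(1/2)` and, using `μ = -λ` for `h_b`,
`h_b(1/2) - h_b(0) ≤ θ (h_b(1) - h_b(1/2))`. Adding the two gives
`0 ≤ (1 + θ)(h_f(1/2) + h_b(1/2)) ≤ h_f(1) + h_b(0) + θ (h_f(0) + h_b(1))`,
which rearranges to the bound.
-/

open Real Set

section ShiftMonotone

variable {h : ℝ → ℝ} {μ a b : ℝ}

lemma monotoneOn_exp_mul_mul_deriv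
    (hd2 : ∀ t ∈ Ioo a b, DifferentiableAt ℝ (deriv h) t)
    (hineq : ∀ t ∈ Ioo a b, -μ * deriv h t ≤ deriv (deriv h) t) :
    MonotoneOn (fun t => exp (μ * t) * deriv h t) (Ioo a b) := by
  have hder : ∀ t ∈ Ioo a b, HasDerivAt (fun t => exp (μ * t) * deriv h t)
      (exp (μ * t) * (μ * deriv h t + deriv (deriv h) t)) t := fun t ht =>
    (((hasDerivAt_id' t).const_mul μ).exp.mul (hd2 t ht).hasDerivAt).congr_deriv (by ring)
  refine monotoneOn_of_hasDerivWithinAt_nonneg (convex_Ioo a b)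
    (f' := fun t => exp (μ * t) * (μ * deriv h t + deriv (deriv h) t))
    (fun t ht => (hder t ht).continuousAt.continuousWithinAt) ?_ ?_ <;> rw [interior_Ioo]
  · exact fun t ht => (hder t ht).hasDerivWithinAt
  · intro t ht
    have := hineq t ht
    exact mul_nonneg (exp_pos _).le (by linarith)

lemma exp_neg_mul_mul_deriv_le_deriv_add
    (hd2 : ∀ t ∈ Ioo a b, DifferentiableAt ℝ (deriv h) t)
    (hineq : ∀ t ∈ Ioo a b, -μ * deriv h t ≤ deriv (deriv h) t)
    {t δ : ℝ} (hδ : 0 ≤ δ) (ht : t ∈ Ioo a b) (htδ : t + δ ∈ Ioo a b) :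
    exp (-(μ * δ)) * deriv h t ≤ deriv h (t + δ) := by
  have hmono := monotoneOn_exp_mul_mul_deriv hd2 hineq ht htδ (by linarith)
  calc exp (-(μ * δ)) * deriv h t
      = exp (-(μ * (t + δ))) * (exp (μ * t) * deriv h t) := by
        rw [← mul_assoc, ← exp_add]; ring_nf
    _ ≤ exp (-(μ * (t + δ))) * (exp (μ * (t + δ)) * deriv h (t + δ)) :=
        mul_le_mul_of_nonneg_left hmono (exp_pos _).le
    _ = deriv h (t + δ) := by rw [← mul_assoc, ← exp_add, neg_add_cancel, exp_zero, one_mul]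

lemma monotoneOn_comp_add_sub_exp_neg_mul_mul
    (hc : ContinuousOn h (Icc a b))
    (hd : ∀ t ∈ Ioo a b, DifferentiableAt ℝ h t)
    (hd2 : ∀ t ∈ Ioo a b, DifferentiableAt ℝ (deriv h) t)
    (hineq : ∀ t ∈ Ioo a b, -μ * deriv h t ≤ deriv (deriv h) t)
    {δ : ℝ} (hδ : 0 ≤ δ) :
    MonotoneOn (fun t => h (t + δ) - exp (-(μ * δ)) * h t) (Icc a (b - δ)) := by
  have hmem : ∀ t ∈ Ioo a (b - δ), t ∈ Ioo a b ∧ t + δ ∈ Ioo a b := fun t ht =>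
    ⟨⟨ht.1, by linarith [ht.2]⟩, ⟨by linarith [ht.1], by linarith [ht.2]⟩⟩
  have hder : ∀ t ∈ Ioo a (b - δ), HasDerivAt (fun t => h (t + δ) - exp (-(μ * δ)) * h t)
      (deriv h (t + δ) - exp (-(μ * δ)) * deriv h t) t := fun t ht =>
    ((hd _ (hmem t ht).2).hasDerivAt.comp_add_const t δ).sub
      ((hd t (hmem t ht).1).hasDerivAt.const_mul _)
  have hcont : ContinuousOn (fun t => h (t + δ) - exp (-(μ * δ)) * h t) (Icc a (b - δ)) :=
    (hc.comp (continuous_add_const δ).continuousOn fun t ht =>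
        ⟨by linarith [ht.1], by linarith [ht.2]⟩).sub
      (continuousOn_const.mul (hc.mono (Icc_subset_Icc_right (by linarith))))
  refine monotoneOn_of_hasDerivWithinAt_nonneg (convex_Icc a (b - δ)) hcont
    (f' := fun t => deriv h (t + δ) - exp (-(μ * δ)) * deriv h t) ?_ ?_ <;>
    rw [interior_Icc]
  · exact fun t ht => (hder t ht).hasDerivWithinAt
  · intro t ht
    exact sub_nonneg.2 (exp_neg_mul_mul_deriv_le_deriv_add hd2 hineq hδ (hmem t ht).1 (hmem t ht).2)

lemma exp_neg_half_mul_sub_le_sub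
    (hc : ContinuousOn h (Icc 0 1))
    (hd : ∀ t ∈ Ioo (0 : ℝ) 1, DifferentiableAt ℝ h t)
    (hd2 : ∀ t ∈ Ioo (0 : ℝ) 1, DifferentiableAt ℝ (deriv h) t)
    (hineq : ∀ t ∈ Ioo (0 : ℝ) 1, -μ * deriv h t ≤ deriv (deriv h) t) :
    exp (-(μ / 2)) * (h (1/2) - h 0) ≤ h 1 - h (1/2) := by
  have := monotoneOn_comp_add_sub_exp_neg_mul_mul hc hd hd2 hineq (δ := 1/2) (by norm_num)
    (by norm_num : (0 : ℝ) ∈ Icc 0 (1 - 1/2)) (by norm_num : (1/2 : ℝ) ∈ Icc 0 (1 - 1/2))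
    (by norm_num)
  rw [mul_one_div] at this
  norm_num at this
  linarith

end ShiftMonotone

/-- The analytic core of Corollary 1.4: the entropic transportation cost
`h_f(0)+h_b(1)` is bounded by `(H_U(μ)+H_U(ν))/(1-exp(-λ/2))`. -/
theorem entropic_cost_bound
    (lam : ℝ) (hlam : 0 < lam) (hf hb : ℝ → ℝ)
    (hfc : ContinuousOn hf (Set.Icc 0 1))
    (hbc : ContinuousOn hb (Set.Icc 0 1))
    (hfd : ∀ t ∈ Set.Ioo (0:ℝ) 1, DifferentiableAt ℝ hf t)
    (hfd2 : ∀ t ∈ Set.Ioo (0:ℝ) 1, DifferentiableAt ℝ (deriv hf) t)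
    (hbd : ∀ t ∈ Set.Ioo (0:ℝ) 1, DifferentiableAt ℝ hb t)
    (hbd2 : ∀ t ∈ Set.Ioo (0:ℝ) 1, DifferentiableAt ℝ (deriv hb) t)
    (hfineq : ∀ t ∈ Set.Ioo (0:ℝ) 1, deriv (deriv hf) t ≥ -lam * deriv hf t)
    (hbineq : ∀ t ∈ Set.Ioo (0:ℝ) 1, deriv (deriv hb) t ≥ lam * deriv hb t)
    (hmid : hf (1/2) + hb (1/2) ≥ 0) :
    hf 0 + hb 1 ≤ (1 / (1 - Real.exp (-(lam / 2)))) * ((hf 0 + hb 0) + (hf 1 + hb 1)) := by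
  have hF := exp_neg_half_mul_sub_le_sub hfc hfd hfd2 hfineq
  have hB : hb (1/2) - hb 0 ≤ exp (-(lam / 2)) * (hb 1 - hb (1/2)) := by
    have := mul_le_mul_of_nonneg_left (exp_neg_half_mul_sub_le_sub (μ := -lam) hbc hbd hbd2
      fun t ht => by simpa only [neg_neg] using hbineq t ht) (exp_pos (-(lam / 2))).le
    rwa [← mul_assoc, ← exp_add, neg_div, neg_neg, neg_add_cancel, exp_zero, one_mul] at this
  rw [one_div_mul_eq_div, le_div_iff₀ (sub_pos.2 (exp_lt_one_iff.2 (by linarith)))]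
  linarith [mul_nonneg (add_pos one_pos (exp_pos (-(lam / 2)))).le hmid]
end

section
/- Let λ > 0 and let φ : [0,1] → ℝ be continuous on [0,1] and twice differentiable on (0,1). If φ''(t) ≥ λ·φ'(t) for all t ∈ (0,1), then for all t ∈ [0,1]: φ(t) ≤ φ(1) + (φ(0) − φ(1))·(1 − exp(−λ(1−t)))/(1 − exp(−λ)). -/
/-!
In the variable `s = exp (λ t)` the inequality `φ'' ≥ λ φ'` says that `φ` is convex:
`d/ds φ = exp (-λ t) φ'(t) / λ`, and `exp (-λ t) φ'(t)` is nondecreasing because its derivative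
is `exp (-λ t) (φ'' - λ φ') ≥ 0`. The claimed bound is the chord of `s ↦ φ (log s / λ)` over
`[1, exp λ]`, evaluated at `s = exp (λ t)`.
-/

open Set Real

theorem ConvexOn.le_chord {g : ℝ → ℝ} {x y z : ℝ} (hg : ConvexOn ℝ (Icc x y) g) (hxy : x < y)
    (hz : z ∈ Icc x y) : g z ≤ ((y - z) * g x + (z - x) * g y) / (y - x) := by
  have hden : 0 < y - x := sub_pos.mpr hxy
  have hchord := hg.2 (left_mem_Icc.mpr hxy.le) (right_mem_Icc.mpr hxy.le)
    (div_nonneg (sub_nonneg.mpr hz.2) hden.le) (div_nonneg (sub_nonneg.mpr hz.1) hden.le)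
    (by field_simp; ring)
  have hpoint : ((y - z) / (y - x)) • x + ((z - x) / (y - x)) • y = z := by
    simp only [smul_eq_mul]
    field_simp
    ring
  rw [hpoint, smul_eq_mul, smul_eq_mul] at hchord
  calc g z ≤ _ := hchord
    _ = _ := by ring

section

variable {lam a b : ℝ} {f : ℝ → ℝ}

theorem monotoneOn_exp_neg_mul_deriv
    (hd2 : ∀ t ∈ Ioo a b, DifferentiableAt ℝ (deriv f) t)
    (hineq : ∀ t ∈ Ioo a b, deriv (deriv f) t ≥ lam * deriv f t) :
    MonotoneOn (fun t => exp (-(lam * t)) * deriv f t) (Ioo a b) := by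
  have hderiv : ∀ t ∈ Ioo a b, HasDerivAt (fun t => exp (-(lam * t)) * deriv f t)
      (exp (-(lam * t)) * (deriv (deriv f) t - lam * deriv f t)) t := by
    intro t ht
    have hexp : HasDerivAt (fun t => exp (-(lam * t))) (exp (-(lam * t)) * -lam) t :=
      ((hasDerivAt_id t).const_mul lam).neg.exp.congr_deriv (by simp)
    exact (hexp.mul (hd2 t ht).hasDerivAt).congr_deriv (by ring)
  refine monotoneOn_of_deriv_nonneg (convex_Ioo a b)
    (fun t ht => (hderiv t ht).continuousAt.continuousWithinAt)
    (fun t ht => (hderiv t (interior_subset ht)).differentiableAt.differentiableWithinAt)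
    fun t ht => ?_
  rw [interior_Ioo] at ht
  rw [(hderiv t ht).deriv]
  exact mul_nonneg (exp_pos _).le (sub_nonneg.mpr (hineq t ht))

theorem convexOn_comp_log_div_of_monotoneOn (hlam : 0 < lam)
    (hc : ContinuousOn f (Icc a b)) (hd : ∀ t ∈ Ioo a b, DifferentiableAt ℝ f t)
    (hmono : MonotoneOn (fun t => exp (-(lam * t)) * deriv f t) (Ioo a b)) :
    ConvexOn ℝ (Icc (exp (lam * a)) (exp (lam * b))) (fun s => f (log s / lam)) := by
  have hpos : ∀ {s}, s ∈ Icc (exp (lam * a)) (exp (lam * b)) → 0 < s :=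
    fun hs => (exp_pos _).trans_le hs.1
  have hmaps : ∀ {s}, s ∈ Icc (exp (lam * a)) (exp (lam * b)) → log s / lam ∈ Icc a b := by
    intro s hs
    rw [← exp_log (hpos hs), mem_Icc, exp_le_exp, exp_le_exp] at hs
    exact ⟨(le_div_iff₀' hlam).mpr hs.1, (div_le_iff₀' hlam).mpr hs.2⟩
  have hmapsIoo : ∀ {s}, s ∈ Ioo (exp (lam * a)) (exp (lam * b)) → log s / lam ∈ Ioo a b := by
    intro s hs
    rw [← exp_log (hpos (Ioo_subset_Icc_self hs)), mem_Ioo, exp_lt_exp, exp_lt_exp] at hs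
    exact ⟨(lt_div_iff₀' hlam).mpr hs.1, (div_lt_iff₀' hlam).mpr hs.2⟩
  have hderiv : ∀ s ∈ Ioo (exp (lam * a)) (exp (lam * b)), HasDerivAt (fun s => f (log s / lam))
      (exp (-(lam * (log s / lam))) * deriv f (log s / lam) / lam) s := by
    intro s hs
    have hs0 : 0 < s := hpos (Ioo_subset_Icc_self hs)
    refine ((hd _ (hmapsIoo hs)).hasDerivAt.comp s
      ((hasDerivAt_log hs0.ne').div_const lam)).congr_deriv ?_
    rw [mul_div_cancel₀ _ hlam.ne', exp_neg, exp_log hs0]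
    ring
  refine MonotoneOn.convexOn_of_deriv (convex_Icc _ _)
    (hc.comp (fun s hs => ((continuousAt_log (hpos hs).ne').div_const lam).continuousWithinAt)
      fun s hs => hmaps hs) ?_ ?_ <;> rw [interior_Icc]
  · exact fun s hs => (hderiv s hs).differentiableAt.differentiableWithinAt
  · intro s hs r hr hsr
    rw [(hderiv s hs).deriv, (hderiv r hr).deriv]
    refine div_le_div_of_nonneg_right (hmono (hmapsIoo hs) (hmapsIoo hr) ?_) hlam.le
    exact div_le_div_of_nonneg_right (log_le_log (hpos (Ioo_subset_Icc_self hs)) hsr) hlam.le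

end

/-- Lemma 5.1 (i) of the paper: comparison lemma for `φ'' ≥ λ φ'` with `λ > 0`. -/
theorem comparison_lemma_forward
    (lam : ℝ) (hlam : 0 < lam) (phi : ℝ → ℝ)
    (hc : ContinuousOn phi (Set.Icc 0 1))
    (hd : ∀ t ∈ Set.Ioo (0:ℝ) 1, DifferentiableAt ℝ phi t)
    (hd2 : ∀ t ∈ Set.Ioo (0:ℝ) 1, DifferentiableAt ℝ (deriv phi) t)
    (hineq : ∀ t ∈ Set.Ioo (0:ℝ) 1, deriv (deriv phi) t ≥ lam * deriv phi t) :
    ∀ t ∈ Set.Icc (0:ℝ) 1,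
      phi t ≤ phi 1 + (phi 0 - phi 1) *
        (1 - Real.exp (-(lam * (1 - t)))) / (1 - Real.exp (-lam)) := by
  intro t ht
  have hconv := convexOn_comp_log_div_of_monotoneOn hlam hc hd
    (monotoneOn_exp_neg_mul_deriv hd2 hineq)
  rw [mul_zero, mul_one, exp_zero] at hconv
  have hexp_lam : 1 < exp lam := one_lt_exp_iff.mpr hlam
  have hmem : exp (lam * t) ∈ Icc 1 (exp lam) :=
    ⟨one_le_exp (mul_nonneg hlam.le ht.1), exp_le_exp.mpr (mul_le_of_le_one_right hlam.le ht.2)⟩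
  have hchord := hconv.le_chord hexp_lam hmem
  simp only [log_one, zero_div, log_exp, div_self hlam.ne', mul_div_cancel_left₀ _ hlam.ne']
    at hchord
  have hexp : exp (-(lam * (1 - t))) = exp (lam * t) / exp lam := by
    rw [← exp_sub]
    ring_nf
  have hden : exp lam - 1 ≠ 0 := (sub_pos.mpr hexp_lam).ne'
  rw [hexp, exp_neg]
  convert hchord using 1
  field_simp
  ring
end

section
/- Let V : ℝ^d → ℝ be smooth, and let f̃, g̃ : (0,1) × ℝ^d → ℝ be smooth and everywhere positive, satisfying ∂_t f̃ = (1/2)Δf̃ − V·f̃ and ∂_t g̃ = −(1/2)Δg̃ + V·g̃. Set μ := f̃·g̃ and v := (1/2)∇(log g̃ − log f̃). Then at every point of (0,1) × ℝ^d: ∂_t v + (1/2)∇|v|² = −(1/4)∇(Δ log μ) − (1/8)∇(|∇ log μ|²) + ∇V. -/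
/-!
With `a = log F̃` and `b = log G̃`, the Feynman–Kac equations become the Hopf–Cole equations
`∂ₜa = ½(Δa + |∇a|²) - V` and `∂ₜb = -½(Δb + |∇b|²) + V`. Subtracting them and using the
parallelogram law `|∇a|² + |∇b|² = ½(|∇ψ|² + |∇φ|²)` for `ψ = a + b = log μ`, `φ = b - a`
gives the Hamilton–Jacobi equation `½∂ₜφ + ½|v|² = -¼Δψ - ⅛|∇ψ|² + V` with `v = ½∇φ`.
Applying `∂ᵢ` and commuting it with `∂ₜ` (symmetry of second derivatives) gives the claim.
-/

noncomputable section

/-- Partial derivative in the `i`-th coordinate direction. -/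
def pd {d : ℕ} (i : Fin d) (f : (Fin d → ℝ) → ℝ) (x : Fin d → ℝ) : ℝ :=
  fderiv ℝ f x (Pi.single i 1)

/-- Spatial gradient. -/
def grad {d : ℕ} (f : (Fin d → ℝ) → ℝ) (x : Fin d → ℝ) : Fin d → ℝ :=
  fun i => pd i f x

/-- Spatial Laplacian. -/
def lap {d : ℕ} (f : (Fin d → ℝ) → ℝ) (x : Fin d → ℝ) : ℝ :=
  ∑ i, pd i (pd i f) x

open Filter Topology

section PartialDerivatives

variable {d : ℕ} {f g : (Fin d → ℝ) → ℝ} {x : Fin d → ℝ} {i : Fin d}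

theorem HasFDerivAt.pd_eq {f' : (Fin d → ℝ) →L[ℝ] ℝ} (h : HasFDerivAt f f' x) :
    pd i f x = f' (Pi.single i 1) := by
  rw [pd, h.fderiv]

theorem Filter.EventuallyEq.pd_eq (h : f =ᶠ[𝓝 x] g) : pd i f x = pd i g x := by
  rw [pd, pd, h.fderiv_eq]

theorem pd_add (hf : DifferentiableAt ℝ f x) (hg : DifferentiableAt ℝ g x) :
    pd i (fun y => f y + g y) x = pd i f x + pd i g x :=
  (hf.hasFDerivAt.add hg.hasFDerivAt).pd_eq

theorem pd_sub (hf : DifferentiableAt ℝ f x) (hg : DifferentiableAt ℝ g x) :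
    pd i (fun y => f y - g y) x = pd i f x - pd i g x :=
  (hf.hasFDerivAt.sub hg.hasFDerivAt).pd_eq

theorem pd_mul (hf : DifferentiableAt ℝ f x) (hg : DifferentiableAt ℝ g x) :
    pd i (fun y => f y * g y) x = pd i f x * g x + f x * pd i g x := by
  rw [(hf.hasFDerivAt.fun_mul hg.hasFDerivAt).pd_eq]
  simp only [add_apply, smul_apply, smul_eq_mul, pd]
  ring

theorem pd_eq_mul_pd_log (hf : DifferentiableAt ℝ f x) (hx : f x ≠ 0) :
    pd i f x = f x * pd i (fun y => Real.log (f y)) x := by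
  rw [(hf.hasFDerivAt.log hx).pd_eq]
  simp only [pd, smul_apply, smul_eq_mul]
  field_simp

theorem ContDiff.pd {m n : WithTop ℕ∞} (hf : ContDiff ℝ n f) (hmn : m + 1 ≤ n) (i : Fin d) :
    ContDiff ℝ m (pd i f) :=
  (hf.fderiv_right hmn).clm_apply contDiff_const

theorem ContDiff.lap {m n : WithTop ℕ∞} (hf : ContDiff ℝ n f) (hmn : m + 2 ≤ n) :
    ContDiff ℝ m (lap f) := by
  have hmn' : m + 1 + 1 ≤ n := by rwa [add_assoc, one_add_one_eq_two]
  exact ContDiff.sum fun j _ => (hf.pd hmn' j).pd le_rfl j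

theorem lap_add (hf : ContDiff ℝ 2 f) (hg : ContDiff ℝ 2 g) :
    lap (fun y => f y + g y) x = lap f x + lap g x := by
  have hpd : ∀ j : Fin d, pd j (fun y => f y + g y) = fun y => pd j f y + pd j g y :=
    fun j => funext fun y =>
      pd_add ((hf.differentiable two_ne_zero) y) ((hg.differentiable two_ne_zero) y)
  simp only [lap, hpd, ← Finset.sum_add_distrib]
  exact Finset.sum_congr rfl fun j _ =>
    pd_add (((hf.pd le_rfl j).differentiable one_ne_zero) x)
      (((hg.pd le_rfl j).differentiable one_ne_zero) x)

theorem lap_eq_mul_lap_log (hf : ContDiff ℝ 2 f) (hf0 : ∀ y, f y ≠ 0) :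
    lap f x = f x * (lap (fun y => Real.log (f y)) x
      + ∑ j, (pd j (fun y => Real.log (f y)) x) ^ 2) := by
  have hlog : ContDiff ℝ 2 (fun y => Real.log (f y)) := hf.log hf0
  have hpd : ∀ j : Fin d, pd j f = fun y => f y * pd j (fun y => Real.log (f y)) y :=
    fun j => funext fun y => pd_eq_mul_pd_log ((hf.differentiable two_ne_zero) y) (hf0 y)
  simp only [lap, Finset.mul_sum, ← Finset.sum_add_distrib]
  refine Finset.sum_congr rfl fun j _ => ?_
  rw [hpd j, pd_mul ((hf.differentiable two_ne_zero) x)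
    (((hlog.pd le_rfl j).differentiable one_ne_zero) x), hpd j]
  ring

theorem sum_sq_pd_add_add_sum_sq_pd_sub (hf : DifferentiableAt ℝ f x)
    (hg : DifferentiableAt ℝ g x) :
    ∑ j, (pd j (fun y => f y + g y) x) ^ 2 + ∑ j, (pd j (fun y => g y - f y) x) ^ 2
      = 2 * (∑ j, (pd j f x) ^ 2 + ∑ j, (pd j g x) ^ 2) := by
  simp only [pd_add hf hg, pd_sub hg hf, Finset.mul_sum, ← Finset.sum_add_distrib]
  exact Finset.sum_congr rfl fun j _ => by ring

end PartialDerivatives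

section SpaceTime

variable {E : Type*} [NormedAddCommGroup E] [NormedSpace ℝ E] {t : ℝ}

theorem DifferentiableAt.comp_prodMk_const {u : ℝ × E → ℝ} {x : E}
    (hu : DifferentiableAt ℝ u (t, x)) : DifferentiableAt ℝ (fun s => u (s, x)) t :=
  hu.comp t (differentiableAt_id.prodMk (differentiableAt_const x))

theorem deriv_comp_prodMk_const {u : ℝ × E → ℝ} {x : E} (hu : DifferentiableAt ℝ u (t, x)) :
    deriv (fun s => u (s, x)) t = fderiv ℝ u (t, x) (1, 0) :=
  (hu.hasFDerivAt.comp_hasDerivAt t ((hasDerivAt_id t).prodMk (hasDerivAt_const t x))).deriv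

theorem contDiff_of_forall_contDiffAt_uncurry {n : WithTop ℕ∞} {F : ℝ → E → ℝ}
    (hF : ∀ y, ContDiffAt ℝ n (fun p : ℝ × E => F p.1 p.2) (t, y)) : ContDiff ℝ n (F t) :=
  contDiff_iff_contDiffAt.2 fun y => (hF y).comp y (contDiffAt_const.prodMk contDiffAt_id)

theorem ContDiffAt.fderiv_fderiv_apply_comm {u : E → ℝ} {p : E} (hu : ContDiffAt ℝ 2 u p)
    (v w : E) :
    fderiv ℝ (fun q => fderiv ℝ u q w) p v = fderiv ℝ (fun q => fderiv ℝ u q v) p w := by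
  have hdiff : DifferentiableAt ℝ (fderiv ℝ u) p :=
    (hu.fderiv_right (m := 1) le_rfl).differentiableAt one_ne_zero
  have hflip : ∀ a b : E, fderiv ℝ (fun q => fderiv ℝ u q a) p b = fderiv ℝ (fderiv ℝ u) p b a :=
    fun a b => by simp [fderiv_clm_apply hdiff (differentiableAt_const a)]
  rw [hflip, hflip]
  exact (hu.isSymmSndFDerivAt (by simp)).eq v w

end SpaceTime

section FeynmanKac

variable {d : ℕ} {t : ℝ} {x : Fin d → ℝ}

theorem pd_comp_prodMk_const {u : ℝ × (Fin d → ℝ) → ℝ} (hu : DifferentiableAt ℝ u (t, x))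
    (i : Fin d) : pd i (fun y => u (t, y)) x = fderiv ℝ u (t, x) (0, Pi.single i 1) := by
  rw [HasFDerivAt.pd_eq (f := fun y => u (t, y))
    (hu.hasFDerivAt.comp x ((hasFDerivAt_const t x).prodMk (hasFDerivAt_id x)))]
  simp

theorem deriv_pd_comm {u : ℝ × (Fin d → ℝ) → ℝ} (hu : ContDiffAt ℝ 2 u (t, x)) (i : Fin d) :
    deriv (fun s => pd i (fun y => u (s, y)) x) t
      = pd i (fun y => deriv (fun s => u (s, y)) t) x := by
  have hnear : ∀ᶠ p in 𝓝 (t, x), DifferentiableAt ℝ u p :=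
    (hu.eventually (by simp)).mono fun p hp => hp.differentiableAt two_ne_zero
  have hdu : ∀ w, DifferentiableAt ℝ (fun q => fderiv ℝ u q w) (t, x) := fun w =>
    ((hu.fderiv_right (m := 1) le_rfl).differentiableAt one_ne_zero).clm_apply
      (differentiableAt_const w)
  have hspace : (fun s => pd i (fun y => u (s, y)) x)
      =ᶠ[𝓝 t] fun s => fderiv ℝ u (s, x) (0, Pi.single i 1) :=
    ((continuous_id.prodMk continuous_const).tendsto t).eventually hnear |>.mono
      fun s hs => pd_comp_prodMk_const hs i
  have htime : (fun y => deriv (fun s => u (s, y)) t)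
      =ᶠ[𝓝 x] fun y => fderiv ℝ u (t, y) (1, 0) :=
    ((continuous_const.prodMk continuous_id).tendsto x).eventually hnear |>.mono
      fun y hy => deriv_comp_prodMk_const hy
  rw [hspace.deriv_eq, htime.pd_eq, deriv_comp_prodMk_const (hdu _),
    pd_comp_prodMk_const (hdu _)]
  exact hu.fderiv_fderiv_apply_comm _ _

theorem deriv_log_of_deriv_eq_lap {F : ℝ → (Fin d → ℝ) → ℝ} {c w : ℝ} (hF : ContDiff ℝ 2 (F t))
    (hF0 : ∀ y, F t y ≠ 0) (hFt : DifferentiableAt ℝ (fun s => F s x) t)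
    (he : deriv (fun s => F s x) t = c * lap (F t) x + w * F t x) :
    deriv (fun s => Real.log (F s x)) t
      = c * (lap (fun y => Real.log (F t y)) x
        + ∑ j, (pd j (fun y => Real.log (F t y)) x) ^ 2) + w := by
  rw [deriv.log hFt (hF0 x), he, lap_eq_mul_lap_log hF hF0]
  field_simp [hF0 x]

theorem deriv_log_sub_log_of_feynmanKac {V : (Fin d → ℝ) → ℝ} {F G : ℝ → (Fin d → ℝ) → ℝ}
    (hF : ∀ y, ContDiffAt ℝ 2 (fun p : ℝ × (Fin d → ℝ) => F p.1 p.2) (t, y))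
    (hG : ∀ y, ContDiffAt ℝ 2 (fun p : ℝ × (Fin d → ℝ) => G p.1 p.2) (t, y))
    (hF0 : ∀ y, F t y ≠ 0) (hG0 : ∀ y, G t y ≠ 0)
    (heF : deriv (fun s => F s x) t = (1/2) * lap (F t) x - V x * F t x)
    (heG : deriv (fun s => G s x) t = -(1/2) * lap (G t) x + V x * G t x) :
    deriv (fun s => Real.log (G s x) - Real.log (F s x)) t
      = -(1/2) * lap (fun y => Real.log (F t y * G t y)) x
        - (1/4) * ∑ j, (pd j (fun y => Real.log (F t y * G t y)) x) ^ 2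
        - ∑ j, ((1/2) * pd j (fun y => Real.log (G t y) - Real.log (F t y)) x) ^ 2
        + 2 * V x := by
  have hFt := contDiff_of_forall_contDiffAt_uncurry hF
  have hGt := contDiff_of_forall_contDiffAt_uncurry hG
  have hFs : DifferentiableAt ℝ (fun s => F s x) t :=
    ((hF x).differentiableAt two_ne_zero).comp_prodMk_const
  have hGs : DifferentiableAt ℝ (fun s => G s x) t :=
    ((hG x).differentiableAt two_ne_zero).comp_prodMk_const
  have hlogF : ContDiff ℝ 2 (fun y => Real.log (F t y)) := hFt.log hF0
  have hlogG : ContDiff ℝ 2 (fun y => Real.log (G t y)) := hGt.log hG0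
  have hlog_mul : (fun y => Real.log (F t y * G t y))
      = fun y => Real.log (F t y) + Real.log (G t y) :=
    funext fun y => Real.log_mul (hF0 y) (hG0 y)
  have hparallelogram := sum_sq_pd_add_add_sum_sq_pd_sub
    ((hlogF.differentiable two_ne_zero) x) ((hlogG.differentiable two_ne_zero) x)
  rw [deriv_fun_sub (hGs.log (hG0 x)) (hFs.log (hF0 x)),
    deriv_log_of_deriv_eq_lap (c := 1/2) (w := -V x) hFt hF0 hFs (by rw [heF]; ring),
    deriv_log_of_deriv_eq_lap hGt hG0 hGs heG,
    hlog_mul, lap_add hlogF hlogG]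
  simp only [mul_pow, ← Finset.mul_sum]
  linear_combination (1/4) * hparallelogram

theorem pd_hamiltonJacobi {ψ φ V p : (Fin d → ℝ) → ℝ} (hψ : ContDiff ℝ 3 ψ) (hφ : ContDiff ℝ 2 φ)
    (hV : Differentiable ℝ V)
    (hp : ∀ y, p y = -(1/2) * lap ψ y - (1/4) * ∑ j, (pd j ψ y) ^ 2
      - ∑ j, ((1/2) * pd j φ y) ^ 2 + 2 * V y) (i : Fin d) :
    (1/2) * pd i p x + (1/2) * pd i (fun y => ∑ j, ((1/2) * pd j φ y) ^ 2) x
      = -(1/4) * pd i (lap ψ) x - (1/8) * pd i (fun y => ∑ j, (pd j ψ y) ^ 2) x + pd i V x := by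
  have hL : Differentiable ℝ (lap ψ) :=
    (hψ.lap (m := 1) (by norm_cast)).differentiable one_ne_zero
  have hpdψ : ∀ j, Differentiable ℝ (pd j ψ) := fun j =>
    (hψ.pd (m := 1) (by norm_cast) j).differentiable one_ne_zero
  have hpdφ : ∀ j, Differentiable ℝ (pd j φ) := fun j =>
    (hφ.pd (m := 1) (by norm_cast) j).differentiable one_ne_zero
  have hS : Differentiable ℝ fun y => ∑ j, (pd j ψ y) ^ 2 := by fun_prop
  have hQ : Differentiable ℝ fun y => ∑ j, ((1/2) * pd j φ y) ^ 2 := by fun_prop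
  rw [show p = _ from funext hp,
    HasFDerivAt.pd_eq (((((hL x).hasFDerivAt.const_mul (-(1/2))).fun_sub
      ((hS x).hasFDerivAt.const_mul (1/4))).fun_sub (hQ x).hasFDerivAt).fun_add
      ((hV x).hasFDerivAt.const_mul 2))]
  simp only [pd, add_apply, sub_apply, smul_apply, smul_eq_mul]
  ring

end FeynmanKac

theorem newton_equation_bridge_general
    (d : ℕ)
    (V : (Fin d → ℝ) → ℝ) (hV : ContDiff ℝ (⊤ : ℕ∞) V)
    (F G : ℝ → (Fin d → ℝ) → ℝ)
    (hF : ContDiffOn ℝ (⊤ : ℕ∞) (fun p : ℝ × (Fin d → ℝ) => F p.1 p.2)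
      (Set.Ioo 0 1 ×ˢ Set.univ))
    (hG : ContDiffOn ℝ (⊤ : ℕ∞) (fun p : ℝ × (Fin d → ℝ) => G p.1 p.2)
      (Set.Ioo 0 1 ×ˢ Set.univ))
    (hFpos : ∀ t ∈ Set.Ioo (0:ℝ) 1, ∀ x, 0 < F t x)
    (hGpos : ∀ t ∈ Set.Ioo (0:ℝ) 1, ∀ x, 0 < G t x)
    (heF : ∀ t ∈ Set.Ioo (0:ℝ) 1, ∀ x,
      deriv (fun s => F s x) t = (1/2) * lap (F t) x - V x * F t x)
    (heG : ∀ t ∈ Set.Ioo (0:ℝ) 1, ∀ x,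
      deriv (fun s => G s x) t = -(1/2) * lap (G t) x + V x * G t x) :
    ∀ t ∈ Set.Ioo (0:ℝ) 1, ∀ x, ∀ i : Fin d,
      deriv (fun s => (1/2) * grad (fun z => Real.log (G s z) - Real.log (F s z)) x i) t
        + (1/2) * grad (fun y =>
            ∑ j, ((1/2) * grad (fun z => Real.log (G t z) - Real.log (F t z)) y j)^2) x i
      = -(1/4) * grad (fun y => lap (fun z => Real.log (F t z * G t z)) y) x i
        - (1/8) * grad (fun y =>
            ∑ j, (grad (fun z => Real.log (F t z * G t z)) y j)^2) x i
        + grad V x i := by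
  intro t ht x i
  have hUF : ∀ y, ContDiffAt ℝ 3 (fun p : ℝ × (Fin d → ℝ) => F p.1 p.2) (t, y) := fun y =>
    (hF.contDiffAt ((isOpen_Ioo.prod isOpen_univ).mem_nhds ⟨ht, trivial⟩)).of_le (by norm_cast)
  have hUG : ∀ y, ContDiffAt ℝ 3 (fun p : ℝ × (Fin d → ℝ) => G p.1 p.2) (t, y) := fun y =>
    (hG.contDiffAt ((isOpen_Ioo.prod isOpen_univ).mem_nhds ⟨ht, trivial⟩)).of_le (by norm_cast)
  have hF0 : ∀ y, F t y ≠ 0 := fun y => (hFpos t ht y).ne'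
  have hG0 : ∀ y, G t y ≠ 0 := fun y => (hGpos t ht y).ne'
  have hFt := contDiff_of_forall_contDiffAt_uncurry hUF
  have hGt := contDiff_of_forall_contDiffAt_uncurry hUG
  have hφ := (((hUG x).log (hG0 x)).sub ((hUF x).log (hF0 x))).of_le (m := 2) (by norm_cast)
  simp only [grad, deriv_const_mul_field, deriv_pd_comm hφ]
  exact pd_hamiltonJacobi ((hFt.mul hGt).log fun y => mul_ne_zero (hF0 y) (hG0 y))
    (((hGt.log hG0).sub (hFt.log hF0)).of_le (by norm_cast)) (hV.differentiable (by norm_cast))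
    (fun y => deriv_log_sub_log_of_feynmanKac (fun y => (hUF y).of_le (by norm_cast))
      (fun y => (hUG y).of_le (by norm_cast)) hF0 hG0 (heF t ht y) (heG t ht y)) i

/-- Theorem 1.1/1.2/1.7 (pointwise computational core): if `f̃, g̃ > 0` solve the
forward/backward Feynman–Kac equations with potential `V`, `μ := f̃ g̃` and
`v := (1/2)∇(log g̃ - log f̃)`, then
`∂ₜ v + (1/2)∇|v|² = -(1/4)∇(Δ log μ) - (1/8)∇(|∇ log μ|²) + ∇V`. -/
theorem newton_equation_bridge
    (d : ℕ) (hd : 1 ≤ d)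
    (V : (Fin d → ℝ) → ℝ) (hV : ContDiff ℝ (⊤ : ℕ∞) V)
    (F G : ℝ → (Fin d → ℝ) → ℝ)
    (hF : ContDiffOn ℝ (⊤ : ℕ∞) (fun p : ℝ × (Fin d → ℝ) => F p.1 p.2)
      (Set.Ioo 0 1 ×ˢ Set.univ))
    (hG : ContDiffOn ℝ (⊤ : ℕ∞) (fun p : ℝ × (Fin d → ℝ) => G p.1 p.2)
      (Set.Ioo 0 1 ×ˢ Set.univ))
    (hFpos : ∀ t ∈ Set.Ioo (0:ℝ) 1, ∀ x, 0 < F t x)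
    (hGpos : ∀ t ∈ Set.Ioo (0:ℝ) 1, ∀ x, 0 < G t x)
    (heF : ∀ t ∈ Set.Ioo (0:ℝ) 1, ∀ x,
      deriv (fun s => F s x) t = (1/2) * lap (F t) x - V x * F t x)
    (heG : ∀ t ∈ Set.Ioo (0:ℝ) 1, ∀ x,
      deriv (fun s => G s x) t = -(1/2) * lap (G t) x + V x * G t x) :
    ∀ t ∈ Set.Ioo (0:ℝ) 1, ∀ x, ∀ i : Fin d,
      deriv (fun s => (1/2) * grad (fun z => Real.log (G s z) - Real.log (F s z)) x i) t
        + (1/2) * grad (fun y =>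
            ∑ j, ((1/2) * grad (fun z => Real.log (G t z) - Real.log (F t z)) y j)^2) x i
      = -(1/4) * grad (fun y => lap (fun z => Real.log (F t z * G t z)) y) x i
        - (1/8) * grad (fun y =>
            ∑ j, (grad (fun z => Real.log (F t z * G t z)) y j)^2) x i
        + grad V x i :=
  newton_equation_bridge_general d V hV F G hF hG hFpos hGpos heF heG
end
end

section
/- Fix α > 0 and ε ∈ (0,1), and let f : ℝ → ℝ be measurable, bounded, nonnegative, compactly supported, and not almost everywhere zero. For t ∈ (0,1] set γ(t) := 2α/(1 − exp(−2αt)) and p_t(x,z) := √(γ(t)/(2π))·exp(−γ(t)·(z − exp(−αt)·x)²/2), and define f_t(x) := ∫_ℝ p_t(x,z)·f(z) dz (so f_t(x) > 0 for all x and x ↦ log f_t(x) is smooth). Then for each l ∈ {1,2,3} there exist constants A ≥ 0 and B ≥ 0 such that for all t ∈ [ε, 1−ε] and all x ∈ ℝ: |(d/dx)^l (log f_t)(x)| ≤ A + B·|x|^l. -/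
open MeasureTheory

noncomputable section

/-- `γ(t) = 2α/(1 - exp(-2αt))`. -/
def gam (α t : ℝ) : ℝ := 2 * α / (1 - Real.exp (-(2 * α * t)))

/-- The transition density of the stationary one-dimensional Ornstein–Uhlenbeck
process: `p_t(x,z) = √(γ(t)/(2π)) exp(-γ(t)(z - exp(-αt)x)²/2)`. -/
def ouKernel (α t x z : ℝ) : ℝ :=
  Real.sqrt (gam α t / (2 * Real.pi)) *
    Real.exp (-(gam α t * (z - Real.exp (-(α * t)) * x)^2 / 2))

/-- `f_t(x) = ∫ p_t(x,z) f(z) dz`. -/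
def ouPotential (α : ℝ) (f : ℝ → ℝ) (t x : ℝ) : ℝ :=
  ∫ z, ouKernel α t x z * f z

/-!
Completing the square in the kernel gives
`p_t(x,z) = √(γ/2π) · exp(-γβ²x²/2) · exp(-γz²/2) · exp(γβxz)` with `β = exp(-αt)`, so
`log f_t(x) = const - γβ²x²/2 + K(γβx)`, where `K` is the cumulant generating function of the
finite measure `exp(-γz²/2) f(z) dz`. The derivatives of `K` are polynomials in the moments of
the exponentially tilted measures, all supported in `supp f ⊆ [-R, R]`, so `|K⁽ⁿ⁾| ≤ 6Rⁿ` for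
`n ≤ 3`. Finally `γ(t) ≤ γ(ε)` and `β ≤ 1` on `[ε, 1 - ε]`.
-/

open Real ProbabilityTheory Filter Topology

namespace ProbabilityTheory

variable {Ω : Type*} {m : MeasurableSpace Ω} {X : Ω → ℝ} {μ : Measure Ω} {v R : ℝ}

/-- The `k`-th moment of `X` under the tilted measure `μ.tilted (v * X ·)` (junk value `0` when
`mgf X μ v = 0`). -/
def tiltedMoment (X : Ω → ℝ) (μ : Measure Ω) (k : ℕ) (v : ℝ) : ℝ :=
  μ[fun ω ↦ X ω ^ k * exp (v * X ω)] / mgf X μ v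

lemma hasDerivAt_tiltedMoment (hv : v ∈ interior (integrableExpSet X μ)) (k : ℕ) :
    HasDerivAt (tiltedMoment X μ k)
      (tiltedMoment X μ (k + 1) v - tiltedMoment X μ k v * tiltedMoment X μ 1 v) v := by
  rcases eq_or_ne μ 0 with rfl | hμ
  · have h0 (j : ℕ) : tiltedMoment X (0 : Measure Ω) j = fun _ ↦ 0 :=
      funext fun _ ↦ by simp [tiltedMoment]
    simpa [h0] using hasDerivAt_const v (0 : ℝ)
  have hM := (mgf_pos' hμ (interior_subset (s := integrableExpSet X μ) hv)).ne'
  refine ((hasDerivAt_integral_pow_mul_exp_real hv k).div (hasDerivAt_mgf hv) hM).congr_deriv ?_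
  unfold tiltedMoment
  simp only [pow_one]
  field_simp

lemma deriv_cgf_eq_tiltedMoment (hv : v ∈ interior (integrableExpSet X μ)) :
    deriv (cgf X μ) v = tiltedMoment X μ 1 v := by
  simp [deriv_cgf hv, tiltedMoment]

lemma iteratedDeriv_two_cgf_eq_tiltedMoment (hv : v ∈ interior (integrableExpSet X μ)) :
    iteratedDeriv 2 (cgf X μ) v = tiltedMoment X μ 2 v - tiltedMoment X μ 1 v ^ 2 := by
  rw [iteratedDeriv_two_cgf hv, deriv_cgf_eq_tiltedMoment hv]
  simp only [tiltedMoment]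

lemma iteratedDeriv_three_cgf_eq_tiltedMoment (hv : v ∈ interior (integrableExpSet X μ)) :
    iteratedDeriv 3 (cgf X μ) v = tiltedMoment X μ 3 v
      - 3 * tiltedMoment X μ 1 v * tiltedMoment X μ 2 v + 2 * tiltedMoment X μ 1 v ^ 3 := by
  have h_eq : iteratedDeriv 2 (cgf X μ) =ᶠ[𝓝 v]
      fun u ↦ tiltedMoment X μ 2 u - tiltedMoment X μ 1 u ^ 2 := by
    filter_upwards [isOpen_interior.mem_nhds hv] with u hu
    exact iteratedDeriv_two_cgf_eq_tiltedMoment hu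
  rw [iteratedDeriv_succ, h_eq.deriv_eq,
    ((hasDerivAt_tiltedMoment hv 2).fun_sub ((hasDerivAt_tiltedMoment hv 1).fun_pow 2)).deriv]
  ring

lemma abs_tiltedMoment_le (hR0 : 0 ≤ R) (hR : ∀ᵐ ω ∂μ, |X ω| ≤ R) (k : ℕ) (v : ℝ) :
    |tiltedMoment X μ k v| ≤ R ^ k := by
  rw [tiltedMoment, abs_div, abs_of_nonneg mgf_nonneg]
  rcases mgf_nonneg.eq_or_lt with h0 | hpos
  · rw [← h0, div_zero]
    positivity
  have hexp : Integrable (fun ω ↦ exp (v * X ω)) μ := by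
    by_contra h
    exact hpos.ne' (integral_undef h)
  rw [div_le_iff₀ hpos]
  by_cases hint : Integrable (fun ω ↦ X ω ^ k * exp (v * X ω)) μ
  · calc |∫ ω, X ω ^ k * exp (v * X ω) ∂μ| ≤ ∫ ω, |X ω ^ k * exp (v * X ω)| ∂μ :=
          abs_integral_le_integral_abs
      _ ≤ ∫ ω, R ^ k * exp (v * X ω) ∂μ := by
          refine integral_mono_ae hint.abs (hexp.const_mul _) ?_
          filter_upwards [hR] with ω hω
          rw [abs_mul, abs_pow, abs_of_pos (exp_pos _)]
          gcongr
      _ = R ^ k * mgf X μ v := integral_const_mul _ _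
  · rw [integral_undef hint, abs_zero]
    positivity

lemma abs_iteratedDeriv_cgf_le (hR0 : 0 ≤ R) (hR : ∀ᵐ ω ∂μ, |X ω| ≤ R)
    (hv : v ∈ interior (integrableExpSet X μ)) {n : ℕ} (hn : n ∈ Finset.Icc 1 3) :
    |iteratedDeriv n (cgf X μ) v| ≤ 6 * R ^ n := by
  have h1 := abs_tiltedMoment_le hR0 hR 1 v
  have h2 := abs_tiltedMoment_le hR0 hR 2 v
  have h3 := abs_tiltedMoment_le hR0 hR 3 v
  set m₁ := tiltedMoment X μ 1 v
  set m₂ := tiltedMoment X μ 2 v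
  set m₃ := tiltedMoment X μ 3 v
  obtain rfl | rfl | rfl : n = 1 ∨ n = 2 ∨ n = 3 := by simp at hn; omega
  · rw [iteratedDeriv_one, deriv_cgf_eq_tiltedMoment hv]
    linarith
  · rw [iteratedDeriv_two_cgf_eq_tiltedMoment hv]
    calc |m₂ - m₁ ^ 2| ≤ |m₂| + |m₁| ^ 2 := (abs_sub _ _).trans_eq (by rw [abs_pow])
      _ ≤ R ^ 2 + (R ^ 1) ^ 2 := by gcongr
      _ ≤ 6 * R ^ 2 := by nlinarith
  · rw [iteratedDeriv_three_cgf_eq_tiltedMoment hv]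
    calc |m₃ - 3 * m₁ * m₂ + 2 * m₁ ^ 3| ≤ |m₃ - 3 * m₁ * m₂| + |2 * m₁ ^ 3| := abs_add_le _ _
      _ ≤ |m₃| + |3 * m₁ * m₂| + |2 * m₁ ^ 3| := by gcongr; exact abs_sub _ _
      _ = |m₃| + 3 * |m₁| * |m₂| + 2 * |m₁| ^ 3 := by simp [abs_mul, abs_pow]
      _ ≤ R ^ 3 + 3 * R ^ 1 * R ^ 2 + 2 * (R ^ 1) ^ 3 := by gcongr
      _ = 6 * R ^ 3 := by ring

lemma integrableExpSet_eq_univ_of_ae_abs_le [IsFiniteMeasure μ] (hX : AEMeasurable X μ)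
    (hR : ∀ᵐ ω ∂μ, |X ω| ≤ R) : integrableExpSet X μ = Set.univ := by
  refine Set.eq_univ_of_forall fun v ↦ ?_
  refine Integrable.of_bound (hX.const_mul v).exp.aestronglyMeasurable (exp (|v| * R)) ?_
  filter_upwards [hR] with ω hω
  rw [norm_of_nonneg (exp_pos _).le, exp_le_exp]
  calc v * X ω ≤ |v * X ω| := le_abs_self _
    _ = |v| * |X ω| := abs_mul _ _
    _ ≤ |v| * R := by gcongr

lemma contDiff_cgf_of_integrableExpSet_eq_univ (h : integrableExpSet X μ = Set.univ)
    {n : WithTop ℕ∞} : ContDiff ℝ n (cgf X μ) := by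
  have := analyticOnNhd_cgf (X := X) (μ := μ)
  rw [h, interior_univ] at this
  exact this.contDiff

end ProbabilityTheory

lemma iteratedDeriv_quadratic_add_comp_const_mul {n : ℕ} {K : ℝ → ℝ} (hK : ContDiff ℝ n K)
    (hn : 0 < n) (a b c x : ℝ) :
    iteratedDeriv n (fun y ↦ a + b * y ^ 2 + K (c * y)) x
      = b * iteratedDeriv n (fun y ↦ y ^ 2) x + c ^ n * iteratedDeriv n K (c * x) := by
  have hKc : ContDiffAt ℝ n (fun y ↦ K (c * y)) x :=
    (hK.comp (contDiff_const.mul contDiff_id)).contDiffAt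
  rw [iteratedDeriv_fun_add (by fun_prop) hKc,
    iteratedDeriv_const_add hn, iteratedDeriv_const_mul_field,
    congrFun (iteratedDeriv_comp_const_mul hK c)]

lemma abs_iteratedDeriv_sq_le {n : ℕ} (hn : 0 < n) (x : ℝ) :
    |iteratedDeriv n (fun y : ℝ ↦ y ^ 2) x| ≤ 2 * (1 + |x| ^ n) := by
  rw [iteratedDeriv_pow]
  obtain rfl | rfl | hn3 : n = 1 ∨ n = 2 ∨ 2 < n := by omega
  · simp [abs_mul]
  · simp; positivity
  · simp [Nat.descFactorial_eq_zero_iff_lt.2 hn3]; positivity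

def gaussianWeightedMeasure (a : ℝ) (f : ℝ → ℝ) : Measure ℝ :=
  volume.withDensity fun z ↦ ENNReal.ofReal (exp (-(a * z ^ 2 / 2)) * f z)

section GaussianWeightedMeasure

variable {a C R : ℝ} {f : ℝ → ℝ}

lemma isFiniteMeasure_gaussianWeightedMeasure (ha : 0 < a) (hf : Measurable f)
    (hC : ∀ z, |f z| ≤ C) : IsFiniteMeasure (gaussianWeightedMeasure a f) := by
  have hgauss : Integrable fun z : ℝ ↦ exp (-(a * z ^ 2 / 2)) := by
    simpa [neg_div, mul_div_right_comm] using integrable_exp_neg_mul_sq (half_pos ha)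
  exact isFiniteMeasure_withDensity_ofReal
    (hgauss.mul_bdd hf.aestronglyMeasurable (.of_forall hC)).hasFiniteIntegral

lemma ae_abs_le_gaussianWeightedMeasure (hf : Measurable f) (hR : ∀ z, f z ≠ 0 → |z| ≤ R) :
    ∀ᵐ z ∂gaussianWeightedMeasure a f, |z| ≤ R := by
  rw [gaussianWeightedMeasure, ae_withDensity_iff (by fun_prop)]
  refine .of_forall fun z hz ↦ hR z fun h0 ↦ hz ?_
  simp [h0]

lemma gaussianWeightedMeasure_ne_zero (hf : Measurable f) (hnn : ∀ z, 0 ≤ f z)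
    (hne : ¬ f =ᵐ[volume] 0) : gaussianWeightedMeasure a f ≠ 0 := by
  rw [gaussianWeightedMeasure, Ne, withDensity_eq_zero_iff (by fun_prop)]
  refine fun h ↦ hne (h.mono fun z hz ↦ ?_)
  rw [Pi.zero_apply, ENNReal.ofReal_eq_zero] at hz
  exact le_antisymm (nonpos_of_mul_nonpos_right hz (exp_pos _)) (hnn z)

lemma mgf_id_gaussianWeightedMeasure (hf : Measurable f) (hnn : ∀ z, 0 ≤ f z) (s : ℝ) :
    mgf id (gaussianWeightedMeasure a f) s = ∫ z, exp (-(a * z ^ 2 / 2)) * f z * exp (s * z) := by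
  rw [mgf, gaussianWeightedMeasure,
    integral_withDensity_eq_integral_toReal_smul (by fun_prop) (.of_forall fun _ ↦ by simp)]
  congr 1 with z
  rw [ENNReal.toReal_ofReal (mul_nonneg (exp_pos _).le (hnn z)), smul_eq_mul, id]

end GaussianWeightedMeasure

lemma gam_pos {α t : ℝ} (hα : 0 < α) (ht : 0 < t) : 0 < gam α t := by
  have : exp (-(2 * α * t)) < 1 := exp_lt_one_iff.2 (by nlinarith)
  exact div_pos (by linarith) (by linarith)

lemma gam_le_gam_of_le {α s t : ℝ} (hα : 0 < α) (hs : 0 < s) (hst : s ≤ t) : gam α t ≤ gam α s := by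
  have : exp (-(2 * α * s)) < 1 := exp_lt_one_iff.2 (by nlinarith)
  have : exp (-(2 * α * t)) ≤ exp (-(2 * α * s)) := exp_le_exp.2 (by nlinarith)
  exact div_le_div_of_nonneg_left (by linarith) (by linarith) (by linarith)

section OrnsteinUhlenbeck

variable {α t C R : ℝ} {f : ℝ → ℝ}

lemma ouPotential_eq_mul_mgf (hf : Measurable f) (hnn : ∀ z, 0 ≤ f z) (x : ℝ) :
    ouPotential α f t x = √(gam α t / (2 * π)) * exp (-(gam α t * exp (-(α * t)) ^ 2 * x ^ 2 / 2))
      * mgf id (gaussianWeightedMeasure (gam α t) f) (gam α t * exp (-(α * t)) * x) := by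
  rw [mgf_id_gaussianWeightedMeasure hf hnn, ← integral_const_mul, ouPotential]
  congr 1 with z
  have h_square : exp (-(gam α t * (z - exp (-(α * t)) * x) ^ 2 / 2))
      = exp (-(gam α t * exp (-(α * t)) ^ 2 * x ^ 2 / 2))
        * (exp (-(gam α t * z ^ 2 / 2)) * exp (gam α t * exp (-(α * t)) * x * z)) := by
    rw [← exp_add, ← exp_add]
    ring_nf
  rw [ouKernel, h_square]
  ring

lemma log_ouPotential_eq (hα : 0 < α) (ht : 0 < t) (hf : Measurable f) (hnn : ∀ z, 0 ≤ f z)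
    (hν : gaussianWeightedMeasure (gam α t) f ≠ 0)
    (hexp : integrableExpSet id (gaussianWeightedMeasure (gam α t) f) = Set.univ) :
    (fun x ↦ log (ouPotential α f t x)) = fun x ↦ log √(gam α t / (2 * π))
      + -(gam α t * exp (-(α * t)) ^ 2 / 2) * x ^ 2
      + cgf id (gaussianWeightedMeasure (gam α t) f) (gam α t * exp (-(α * t)) * x) := by
  funext x
  have hmgf := mgf_pos' hν (Set.eq_univ_iff_forall.1 hexp (gam α t * exp (-(α * t)) * x))
  have hsqrt : 0 < √(gam α t / (2 * π)) := sqrt_pos.2 (by have := gam_pos hα ht; positivity)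
  rw [ouPotential_eq_mul_mgf hf hnn, log_mul (by positivity) hmgf.ne', log_mul hsqrt.ne'
    (exp_pos _).ne', log_exp, cgf]
  ring

lemma abs_iteratedDeriv_log_ouPotential_le (hα : 0 < α) (ht : 0 < t) (hf : Measurable f)
    (hnn : ∀ z, 0 ≤ f z) (hC : ∀ z, f z ≤ C) (hR0 : 0 ≤ R) (hR : ∀ z, f z ≠ 0 → |z| ≤ R)
    (hne : ¬ f =ᵐ[volume] 0) {n : ℕ} (hn : n ∈ Finset.Icc 1 3) (x : ℝ) :
    |iteratedDeriv n (fun y ↦ log (ouPotential α f t y)) x|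
      ≤ gam α t + 6 * (gam α t * R) ^ n + gam α t * |x| ^ n := by
  set g := gam α t
  set β := exp (-(α * t))
  set ν := gaussianWeightedMeasure g f
  have hg : 0 < g := gam_pos hα ht
  have hβ0 : 0 < β := exp_pos _
  have hβ : β ≤ 1 := exp_le_one_iff.2 (by nlinarith)
  have hgβ_le : g * β ≤ g := mul_le_of_le_one_right hg.le hβ
  have hgβ2_le : g * β ^ 2 ≤ g := mul_le_of_le_one_right hg.le (pow_le_one₀ hβ0.le hβ)
  have hn0 : 0 < n := (Finset.mem_Icc.1 hn).1
  have : IsFiniteMeasure ν := isFiniteMeasure_gaussianWeightedMeasure hg hf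
    (C := C) fun z ↦ abs_le.2 ⟨by linarith [hnn z, hnn 0, hC 0], hC z⟩
  have hνR := ae_abs_le_gaussianWeightedMeasure (a := g) hf hR
  have hexp := integrableExpSet_eq_univ_of_ae_abs_le aemeasurable_id hνR
  rw [log_ouPotential_eq hα ht hf hnn (gaussianWeightedMeasure_ne_zero hf hnn hne) hexp,
    iteratedDeriv_quadratic_add_comp_const_mul (contDiff_cgf_of_integrableExpSet_eq_univ hexp) hn0]
  have hcgf := abs_iteratedDeriv_cgf_le (X := id) hR0 hνR (v := g * β * x)
    (by simp only [hexp, interior_univ, Set.mem_univ]) hn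
  have hsq := abs_iteratedDeriv_sq_le hn0 x
  calc _ ≤ |-(g * β ^ 2 / 2)| * |iteratedDeriv n (fun y ↦ y ^ 2) x|
        + |g * β| ^ n * |iteratedDeriv n (cgf id ν) (g * β * x)| := by
        rw [← abs_pow, ← abs_mul, ← abs_mul]; exact abs_add_le _ _
    _ ≤ g / 2 * (2 * (1 + |x| ^ n)) + g ^ n * (6 * R ^ n) := by
        rw [abs_neg, abs_of_pos (show 0 < g * β ^ 2 / 2 by positivity),
          abs_of_pos (show 0 < g * β by positivity)]
        gcongr
    _ = _ := by ring

end OrnsteinUhlenbeck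

/-- Lemma 5.2 (ii) of the paper: polynomial bounds, uniform in `t ∈ [ε, 1-ε]`,
on the logarithmic derivatives of order `1, 2, 3` of the forward Schrödinger
potential `f_t`. -/
theorem ou_log_derivative_polynomial_bounds
    (α ε : ℝ) (hα : 0 < α) (hε : ε ∈ Set.Ioo (0:ℝ) 1)
    (f : ℝ → ℝ) (hmeas : Measurable f)
    (hbdd : ∃ C, ∀ z, f z ≤ C) (hnn : ∀ z, 0 ≤ f z)
    (hsupp : HasCompactSupport f)
    (hne : ¬ (f =ᵐ[volume] 0)) :
    ∀ l ∈ ({1, 2, 3} : Set ℕ), ∃ A, 0 ≤ A ∧ ∃ B, 0 ≤ B ∧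
      ∀ t ∈ Set.Icc ε (1 - ε), ∀ x : ℝ,
        |iteratedDeriv l (fun y => Real.log (ouPotential α f t y)) x|
          ≤ A + B * |x|^l := by
  intro l hl
  obtain ⟨C, hC⟩ := hbdd
  obtain ⟨R, hR0, hR⟩ := hsupp.isCompact.isBounded.exists_pos_norm_le
  have hl' : l ∈ Finset.Icc 1 3 := by simp at hl ⊢; omega
  have hΓ := gam_pos hα hε.1
  refine ⟨gam α ε + 6 * (gam α ε * R) ^ l, by positivity, gam α ε, hΓ.le, fun t ht x ↦ ?_⟩
  have ht0 : 0 < t := hε.1.trans_le ht.1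
  have hgt := gam_le_gam_of_le hα hε.1 ht.1
  calc _ ≤ gam α t + 6 * (gam α t * R) ^ l + gam α t * |x| ^ l :=
        abs_iteratedDeriv_log_ouPotential_le hα ht0 hmeas hnn hC hR0.le
          (fun z hz ↦ hR z (subset_tsupport f hz)) hne hl' x
    _ ≤ gam α ε + 6 * (gam α ε * R) ^ l + gam α ε * |x| ^ l := by
        have hgt0 := gam_pos hα ht0
        gcongr

end
end
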